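/- For every integer m ≥ 2 there exist constants B_m > 0 and C_m > 0, depending only on m, such that for every integer N ≥ m and every ν = (ν_1,…,ν_N) ∈ ℕ^N with ∑_{i=1}^N ν_i = N: (1/((N)_m)) ∑_{k=1}^{m−1} ∑_{b_1 ≥ ⋯ ≥ b_k ≥ 1, b_1+⋯+b_k = m} [ m! / ∏_{j=1}^m ((j!)^{κ_j} κ_j!) ] · ∑_{distinct (i_1,…,i_k)} ∏_{l=1}^k (ν_{i_l})_{b_l} ≤ C(m,2)·(1 + C_m/N)·c_N + B_m·(1 + C_m/N)·D_N, where κ_j = |{l : b_l = j}|, the inner sum is over tuples of pairwise distinct indices in {1,…,N}, and C(m,2) = m(m−1)/2. -/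

import Mathlib

/-!
Bounding the sum over injective index tuples by the sum over all tuples factorises each term
into factorial moments `S_c = ∑ᵢ (νᵢ)_c`. As `νᵢ ≤ N`, `S_c ≤ N^(c-a) S_a`, with `S₁ = N` and
`S₂ = N(N-1) c_N`. With `m - 1` parts the only partition is `(2,1,…,1)`, of coefficient
`C(m,2)`, contributing `C(m,2) S₂ N^(m-2)`. With fewer parts, some part is at least `3` or two
parts equal `2`; since `S₃` and `S₂²/N` are at most `N²(N-1) D_N`, such a term is at most
`N^(m-3) N²(N-1) D_N`. Finally `(N)_m = N(N-1)(N-2)_(m-2)`, and the Weierstrass product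
inequality gives `N^(m-2) ≤ (1 + m^m/N)(N-2)_(m-2)`.
-/

open Finset

/-- The real falling factorial `(x)_b = x (x-1) ⋯ (x-b+1)`. -/
noncomputable def fallingFact (x : ℝ) (b : ℕ) : ℝ := ∏ j ∈ Finset.range b, (x - j)

theorem fallingFact_natCast (n b : ℕ) : fallingFact n b = n.descFactorial b := by
  rw [fallingFact, ← descPochhammer_eval_eq_prod_range, descPochhammer_eval_eq_descFactorial]

theorem fallingFact_add_two (x : ℝ) (b : ℕ) :
    fallingFact x (b + 2) = x * (x - 1) * fallingFact (x - 2) b := by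
  have shift : ∀ j : ℕ, x - ((j + 1 + 1 : ℕ) : ℝ) = x - 2 - j := fun j => by push_cast; ring
  simp only [fallingFact, prod_range_succ', shift]
  push_cast
  ring

theorem fallingFact_sub_two_pos {N n : ℕ} (hN : n + 2 ≤ N) : 0 < fallingFact (N - 2) n :=
  prod_pos fun j hj => by
    have : (j : ℝ) + 3 ≤ N := by exact_mod_cast (show j + 3 ≤ N by have := mem_range.1 hj; omega)
    linarith

theorem Finset.one_sub_sum_le_prod_one_sub {ι R : Type*} [CommRing R] [LinearOrder R]
    [IsStrictOrderedRing R] (s : Finset ι) (y : ι → R) (hy : ∀ i ∈ s, y i ≤ 1)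
    (hy₀ : ∀ i ∈ s, 0 ≤ y i) : 1 - ∑ i ∈ s, y i ≤ ∏ i ∈ s, (1 - y i) := by
  classical
  induction s using Finset.induction_on with
  | empty => simp
  | insert a s ha ih =>
    rw [sum_insert ha, prod_insert ha]
    have ih := ih (fun i hi => hy i (mem_insert_of_mem hi))
      (fun i hi => hy₀ i (mem_insert_of_mem hi))
    have hsum := sum_nonneg fun i hi => hy₀ i (mem_insert_of_mem hi)
    nlinarith [mul_le_mul_of_nonneg_left ih (sub_nonneg.2 (hy a (mem_insert_self a s))),
      mul_nonneg (hy₀ a (mem_insert_self a s)) hsum]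

theorem pow_le_pow_mul_fallingFact_sub_two {N n : ℕ} (hN : n + 2 ≤ N) :
    (N : ℝ) ^ n ≤ ((n : ℝ) + 2) ^ n * fallingFact (N - 2) n := by
  have hN' : (n : ℝ) + 2 ≤ N := by exact_mod_cast hN
  calc (N : ℝ) ^ n = ∏ _j ∈ range n, (N : ℝ) := by simp
    _ ≤ ∏ j ∈ range n, ((n : ℝ) + 2) * (N - 2 - j) := by
      refine prod_le_prod (fun _ _ => by positivity) fun j hj => ?_
      have hj : (j : ℝ) + 1 ≤ n := by exact_mod_cast mem_range.1 hj
      nlinarith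
    _ = ((n : ℝ) + 2) ^ n * fallingFact (N - 2) n := by
      rw [prod_mul_distrib, prod_const, card_range, fallingFact]

theorem pow_le_one_add_div_mul_fallingFact_sub_two {N n : ℕ} (hN : n + 2 ≤ N) :
    (N : ℝ) ^ n ≤ (1 + ((n : ℝ) + 2) ^ (n + 2) / N) * fallingFact (N - 2) n := by
  have hN' : (n : ℝ) + 2 ≤ N := by exact_mod_cast hN
  have hN₀ : (0 : ℝ) < N := by linarith
  set y : ℕ → ℝ := fun j => (j + 2) / N
  have hy : ∀ j ∈ range n, y j ≤ ((n : ℝ) + 2) / N := fun j hj => by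
    have : (j : ℝ) + 1 ≤ n := by exact_mod_cast mem_range.1 hj
    exact div_le_div_of_nonneg_right (by linarith) hN₀.le
  have hsum : ∑ j ∈ range n, y j ≤ ((n : ℝ) + 2) ^ 2 / N :=
    calc ∑ j ∈ range n, y j ≤ n * (((n : ℝ) + 2) / N) := by
          simpa using sum_le_sum hy
      _ ≤ ((n : ℝ) + 2) ^ 2 / N := by rw [mul_div_assoc', sq]; gcongr; linarith
  have hprod : (N : ℝ) ^ n * (1 - ∑ j ∈ range n, y j) ≤ fallingFact (N - 2) n := by
    have hfac : fallingFact (N - 2) n = (N : ℝ) ^ n * ∏ j ∈ range n, (1 - y j) := by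
      rw [fallingFact, show (N : ℝ) ^ n = ∏ _j ∈ range n, (N : ℝ) by simp, ← prod_mul_distrib]
      exact prod_congr rfl fun j _ => by simp only [y]; field_simp; ring
    rw [hfac]
    gcongr
    refine one_sub_sum_le_prod_one_sub _ _ (fun j hj => (hy j hj).trans ?_) fun j _ => by positivity
    rw [div_le_one hN₀]; exact hN'
  have hcrude := pow_le_pow_mul_fallingFact_sub_two hN
  set P := fallingFact (N - 2) n
  calc (N : ℝ) ^ n ≤ P + ((n : ℝ) + 2) ^ 2 / N * N ^ n := by
        nlinarith [mul_le_mul_of_nonneg_left hsum (by positivity : (0 : ℝ) ≤ (N : ℝ) ^ n)]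
    _ ≤ P + ((n : ℝ) + 2) ^ 2 / N * (((n : ℝ) + 2) ^ n * P) := by gcongr
    _ = (1 + ((n : ℝ) + 2) ^ (n + 2) / N) * P := by ring

theorem Nat.descFactorial_le_descFactorial_mul_pow {n N a c : ℕ} (hn : n ≤ N) (hac : a ≤ c) :
    n.descFactorial c ≤ n.descFactorial a * N ^ (c - a) := by
  rw [← Nat.descFactorial_mul_descFactorial hac, mul_comm]
  gcongr
  exact (Nat.descFactorial_le_pow _ _).trans (Nat.pow_le_pow_left (by omega) _)

theorem natCast_mul_natCast_sub_one_nonneg (n : ℕ) : 0 ≤ (n : ℝ) * (n - 1) := by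
  rw [← Nat.cast_descFactorial_two]
  positivity

theorem exists_three_le_or_exists_two_eq_two {ι : Type*} [Fintype ι] {b : ι → ℕ}
    (hb : ∀ l, 1 ≤ b l) (hcard : Fintype.card ι + 2 ≤ ∑ l, b l) :
    (∃ l, 3 ≤ b l) ∨ ∃ l l', l ≠ l' ∧ b l = 2 ∧ b l' = 2 := by
  classical
  refine or_iff_not_imp_left.2 fun h3 => ?_
  push Not at h3
  have htwos : 1 < #{l | b l = 2} := by
    have hsum : ∑ l, b l = ∑ l, (1 + if b l = 2 then 1 else 0) :=
      sum_congr rfl fun l _ => by have := hb l; have := h3 l; split_ifs <;> omega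
    rw [sum_add_distrib, ← card_filter, sum_const, card_univ, smul_eq_mul, mul_one] at hsum
    omega
  obtain ⟨l, hl, l', hl', hne⟩ := one_lt_card.1 htwos
  exact ⟨l, l', hne, (mem_filter.1 hl).2, (mem_filter.1 hl').2⟩

section FactorialMoments

variable {N : ℕ} (ν : Fin N → ℕ)

noncomputable def factorialMoment (c : ℕ) : ℝ := ∑ i, ((ν i).descFactorial c : ℝ)

/-- `pairSum ν = N (N - 1) c_N` and `multipleMergerSum ν = N² (N - 1) D_N`. -/
noncomputable def pairSum : ℝ := ∑ i, (ν i : ℝ) * ((ν i : ℝ) - 1)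

noncomputable def multipleMergerSum : ℝ :=
  ∑ i, (ν i : ℝ) * ((ν i : ℝ) - 1) *
    ((ν i : ℝ) + (1 / (N : ℝ)) * ∑ j ∈ Finset.univ.erase i, (ν j : ℝ) ^ 2)

theorem factorialMoment_nonneg (c : ℕ) : 0 ≤ factorialMoment ν c :=
  sum_nonneg fun _ _ => Nat.cast_nonneg _

theorem factorialMoment_two : factorialMoment ν 2 = pairSum ν := by
  simp only [factorialMoment, pairSum, Nat.cast_descFactorial_two]

theorem multipleMergerSum_nonneg : 0 ≤ multipleMergerSum ν :=
  sum_nonneg fun _ _ => mul_nonneg (natCast_mul_natCast_sub_one_nonneg _) (by positivity)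

theorem pairSum_nonneg : 0 ≤ pairSum ν :=
  factorialMoment_two ν ▸ factorialMoment_nonneg ν 2

variable {ν}

theorem factorialMoment_one (hν : ∑ i, ν i = N) : factorialMoment ν 1 = N := by
  simp [factorialMoment, ← Nat.cast_sum, hν]

theorem factorialMoment_le_pow_mul (hν : ∑ i, ν i = N) {a c : ℕ} (hac : a ≤ c) :
    factorialMoment ν c ≤ (N : ℝ) ^ (c - a) * factorialMoment ν a := by
  rw [factorialMoment, factorialMoment, mul_sum]
  refine sum_le_sum fun i _ => ?_
  rw [mul_comm]
  exact_mod_cast Nat.descFactorial_le_descFactorial_mul_pow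
    (hν ▸ single_le_sum (fun _ _ => Nat.zero_le _) (mem_univ i)) hac

theorem factorialMoment_le_pow (hν : ∑ i, ν i = N) {c : ℕ} (hc : 1 ≤ c) :
    factorialMoment ν c ≤ (N : ℝ) ^ c := by
  simpa [factorialMoment_one hν, ← pow_succ, Nat.sub_add_cancel hc] using
    factorialMoment_le_pow_mul hν hc

theorem factorialMoment_three_le : factorialMoment ν 3 ≤ multipleMergerSum ν := by
  refine sum_le_sum fun i _ => ?_
  have h3 : ((ν i).descFactorial 3 : ℝ) ≤ ((ν i).descFactorial 2 : ℝ) * ν i := by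
    exact_mod_cast (pow_one (ν i)).symm ▸ Nat.descFactorial_le_descFactorial_mul_pow le_rfl
      (by norm_num : 2 ≤ 3)
  rw [Nat.cast_descFactorial_two] at h3
  exact h3.trans (mul_le_mul_of_nonneg_left (le_add_of_nonneg_right (by positivity))
    (natCast_mul_natCast_sub_one_nonneg _))

theorem pairSum_sq_le (hν : ∑ i, ν i = N) : pairSum ν ^ 2 ≤ N * multipleMergerSum ν := by
  rcases Nat.eq_zero_or_pos N with rfl | hN
  · simp [pairSum]
  have hνN : ∀ i, (ν i : ℝ) ≤ N := fun i => by
    exact_mod_cast hν ▸ single_le_sum (fun _ _ => Nat.zero_le _) (mem_univ i)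
  set w : Fin N → ℝ := fun i => (ν i : ℝ) * ((ν i : ℝ) - 1)
  have hw : ∀ i, 0 ≤ w i := fun i => natCast_mul_natCast_sub_one_nonneg _
  have hw_sq : ∀ i, w i ≤ (ν i : ℝ) ^ 2 := fun i => by simp only [w]; nlinarith
  calc pairSum ν ^ 2 = ∑ i, w i * (w i + ∑ j ∈ univ.erase i, w j) := by
        rw [sq, pairSum, sum_mul]
        exact sum_congr rfl fun i _ => by rw [add_sum_erase _ _ (mem_univ i), mul_comm]
    _ ≤ ∑ i, w i * (N * ν i + ∑ j ∈ univ.erase i, (ν j : ℝ) ^ 2) := by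
        gcongr with i _ j _
        · exact hw i
        · simp only [w]; nlinarith [hνN i, Nat.cast_nonneg (α := ℝ) (ν i)]
        · exact hw_sq j
    _ = N * multipleMergerSum ν := by
        rw [multipleMergerSum, mul_sum]
        refine sum_congr rfl fun i _ => ?_
        simp only [w]
        field_simp

theorem prod_factorialMoment_le_pow (hν : ∑ i, ν i = N) {ι : Type*} (s : Finset ι) {b : ι → ℕ}
    (hb : ∀ l ∈ s, 1 ≤ b l) : ∏ l ∈ s, factorialMoment ν (b l) ≤ (N : ℝ) ^ ∑ l ∈ s, b l := by
  rw [← prod_pow_eq_pow_sum]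
  exact prod_le_prod (fun _ _ => factorialMoment_nonneg ν _) fun l hl =>
    factorialMoment_le_pow hν (hb l hl)

theorem mul_prod_factorialMoment_le (hν : ∑ i, ν i = N) {ι : Type*} [Fintype ι]
    [DecidableEq ι] {b : ι → ℕ} (hb : ∀ l, 1 ≤ b l) (hcard : Fintype.card ι + 2 ≤ ∑ l, b l) :
    N * ∏ l, factorialMoment ν (b l) ≤ (N : ℝ) ^ (∑ l, b l - 2) * multipleMergerSum ν := by
  have hrest : ∀ s : Finset ι, ∏ l ∈ s, factorialMoment ν (b l) ≤ (N : ℝ) ^ ∑ l ∈ s, b l :=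
    fun s => prod_factorialMoment_le_pow hν s fun l _ => hb l
  rcases exists_three_le_or_exists_two_eq_two hb hcard with ⟨l, hl⟩ | ⟨l, l', hne, hl, hl'⟩
  · have hsplit := add_sum_erase univ b (mem_univ l)
    rw [← mul_prod_erase univ _ (mem_univ l)]
    calc (N : ℝ) * (factorialMoment ν (b l) * ∏ l' ∈ univ.erase l, factorialMoment ν (b l'))
        ≤ N * ((N ^ (b l - 3) * multipleMergerSum ν) * N ^ ∑ l' ∈ univ.erase l, b l') := by
          have hT := multipleMergerSum_nonneg ν
          gcongr N * ?_
          refine mul_le_mul ?_ (hrest _) (prod_nonneg fun _ _ => factorialMoment_nonneg ν _)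
            (by positivity)
          exact (factorialMoment_le_pow_mul hν hl).trans
            (mul_le_mul_of_nonneg_left factorialMoment_three_le (by positivity))
      _ = (N : ℝ) ^ (∑ l, b l - 2) * multipleMergerSum ν := by
          rw [show ∑ l, b l - 2 = 1 + (b l - 3) + ∑ l' ∈ univ.erase l, b l' by omega]
          ring
  · have hl'mem : l' ∈ univ.erase l := mem_erase.2 ⟨hne.symm, mem_univ l'⟩
    set E := ∑ l'' ∈ (univ.erase l).erase l', b l''
    have hsplit := add_sum_erase univ b (mem_univ l)
    have hsplit' := add_sum_erase _ b hl'mem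
    rw [← mul_prod_erase univ _ (mem_univ l), ← mul_prod_erase _ _ hl'mem, hl, hl',
      factorialMoment_two]
    calc (N : ℝ) * (pairSum ν * (pairSum ν *
          ∏ l'' ∈ (univ.erase l).erase l', factorialMoment ν (b l'')))
        ≤ N * (pairSum ν * (pairSum ν * N ^ E)) := by
          have := pairSum_nonneg ν
          gcongr
          exact hrest _
      _ = pairSum ν ^ 2 * N ^ (1 + E) := by ring
      _ ≤ N * multipleMergerSum ν * N ^ (1 + E) := by
          gcongr
          exact pairSum_sq_le hν
      _ = (N : ℝ) ^ (∑ l, b l - 2) * multipleMergerSum ν := by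
          rw [show ∑ l, b l - 2 = 1 + (1 + E) by omega]
          ring

end FactorialMoments

theorem Finset.sum_filter_injective_prod_le_prod_sum {ι α R : Type*} [Fintype ι] [DecidableEq ι]
    [Fintype α] [DecidableEq α] [CommSemiring R] [PartialOrder R] [IsOrderedRing R]
    (f : ι → α → R) (hf : ∀ l a, 0 ≤ f l a) :
    ∑ i ∈ univ.filter (fun i : ι → α => Function.Injective i), ∏ l, f l (i l) ≤
      ∏ l, ∑ a, f l a := by
  rw [Fintype.prod_sum]
  exact sum_le_univ_sum_of_nonneg fun i => prod_nonneg fun l _ => hf l (i l)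

def partitionsInto (m k : ℕ) : Finset (Fin k → Fin (m + 1)) :=
  Finset.univ.filter fun b : Fin k → Fin (m + 1) =>
    (∀ l l' : Fin k, l ≤ l' → (b l' : ℕ) ≤ (b l : ℕ)) ∧
    (∀ l, 1 ≤ (b l : ℕ)) ∧ ∑ l, (b l : ℕ) = m

/-- The number of ways to split `m` labelled lineages into unlabelled groups of sizes `b`. -/
noncomputable def partitionCoeff (m : ℕ) {k : ℕ} (b : Fin k → Fin (m + 1)) : ℝ :=
  (m.factorial : ℝ) /
    ∏ j ∈ Finset.range (m + 1),
      ((j.factorial : ℝ) ^ ((Finset.univ.filter (fun l : Fin k => (b l : ℕ) = j)).card) *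
        (((Finset.univ.filter (fun l : Fin k => (b l : ℕ) = j)).card).factorial : ℝ))

noncomputable def injectiveSum {N k : ℕ} (ν : Fin N → ℕ) (b : Fin k → ℕ) : ℝ :=
  ∑ i ∈ Finset.univ.filter (fun i : Fin k → Fin N => Function.Injective i),
    ∏ l, fallingFact (ν (i l) : ℝ) (b l)

theorem partitionCoeff_nonneg (m : ℕ) {k : ℕ} (b : Fin k → Fin (m + 1)) :
    0 ≤ partitionCoeff m b := by
  unfold partitionCoeff
  positivity

theorem injectiveSum_le_prod_factorialMoment {N k : ℕ} (ν : Fin N → ℕ) (b : Fin k → ℕ) :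
    injectiveSum ν b ≤ ∏ l, factorialMoment ν (b l) := by
  simpa only [injectiveSum, factorialMoment, fallingFact_natCast] using
    sum_filter_injective_prod_le_prod_sum (fun l i => ((ν i).descFactorial (b l) : ℝ))
      fun _ _ => Nat.cast_nonneg _

theorem val_eq_of_mem_partitionsInto_succ {n : ℕ} {b : Fin (n + 1) → Fin (n + 3)}
    (hb : b ∈ partitionsInto (n + 2) (n + 1)) (l : Fin (n + 1)) :
    (b l : ℕ) = if l = 0 then 2 else 1 := by
  obtain ⟨hanti, hpos, hsum⟩ := (mem_filter.1 hb).2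
  obtain ⟨c, hbc⟩ : ∃ c : Fin (n + 1) → ℕ, ∀ l, (b l : ℕ) = c l + 1 :=
    ⟨fun l => b l - 1, fun l => (Nat.sub_add_cancel (hpos l)).symm⟩
  simp only [hbc, add_le_add_iff_right] at hanti
  have hc : ∑ l, c l = 1 := by
    simp only [hbc, sum_add_distrib, sum_const, card_univ, Fintype.card_fin, smul_eq_mul,
      mul_one] at hsum
    omega
  have hc0 : c 0 = 1 := by
    have hle : c 0 ≤ 1 :=
      (single_le_sum (f := c) (fun _ _ => Nat.zero_le _) (mem_univ 0)).trans_eq hc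
    by_contra h
    have : ∑ l, c l = 0 := sum_eq_zero fun l _ => by have := hanti 0 l (Fin.zero_le l); omega
    omega
  have hrest : ∀ l ∈ univ.erase 0, c l = 0 := by
    have := add_sum_erase univ c (mem_univ 0)
    exact sum_eq_zero_iff.1 (by omega)
  rw [hbc]
  split_ifs with h
  · rw [h, hc0]
  · simp [hrest l (mem_erase.2 ⟨h, mem_univ l⟩)]

theorem card_filter_ite_zero_eq (n j : ℕ) :
    #{l : Fin (n + 1) | (if l = 0 then 2 else 1) = j} =
      if j = 2 then 1 else if j = 1 then n else 0 := by
  split_ifs with h2 h1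
  · subst h2; simp [filter_eq']
  · subst h1; simp [filter_ne']
  · simp only [card_eq_zero, filter_eq_empty_iff]
    intro l _
    split_ifs <;> omega

theorem partitionCoeff_eq_choose_two {n : ℕ} {b : Fin (n + 1) → Fin (n + 3)}
    (hb : b ∈ partitionsInto (n + 2) (n + 1)) :
    partitionCoeff (n + 2) b = (n + 2).choose 2 := by
  have hκ : ∀ j, #{l | (b l : ℕ) = j} = if j = 2 then 1 else if j = 1 then n else 0 := fun j => by
    simp only [val_eq_of_mem_partitionsInto_succ hb, card_filter_ite_zero_eq]
  rw [partitionCoeff, prod_eq_mul 1 2 (by norm_num) (fun j _ hj => by simp [hκ, hj.1, hj.2])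
    (fun h => absurd (by simp) h) (fun h => absurd (by simp) h)]
  simp only [hκ]
  have := Nat.choose_mul_factorial_mul_factorial (show 2 ≤ n + 2 by omega)
  simp only [Nat.add_sub_cancel] at this
  rw [← this]
  push_cast
  field_simp
  simp [Nat.factorial]

theorem mul_injectiveSum_le_of_mem_partitionsInto {N m k : ℕ} {ν : Fin N → ℕ}
    (hν : ∑ i, ν i = N) (hk : k + 2 ≤ m) {b : Fin k → Fin (m + 1)} (hb : b ∈ partitionsInto m k) :
    N * injectiveSum ν (fun l => b l) ≤ (N : ℝ) ^ (m - 2) * multipleMergerSum ν := by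
  obtain ⟨-, hpos, hsum⟩ := (mem_filter.1 hb).2
  calc (N : ℝ) * injectiveSum ν (fun l => b l)
      ≤ N * ∏ l, factorialMoment ν (b l) := by
        gcongr
        exact injectiveSum_le_prod_factorialMoment ν _
    _ ≤ (N : ℝ) ^ (m - 2) * multipleMergerSum ν := by
        simpa only [hsum] using mul_prod_factorialMoment_le hν hpos (by simpa [hsum] using hk)

theorem sum_partitionsInto_succ_le {N n : ℕ} {ν : Fin N → ℕ} (hν : ∑ i, ν i = N) :
    ∑ b ∈ partitionsInto (n + 2) (n + 1), partitionCoeff (n + 2) b * injectiveSum ν (fun l => b l)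
      ≤ (n + 2).choose 2 * (pairSum ν * (N : ℝ) ^ n) := by
  have hterm : ∀ b ∈ partitionsInto (n + 2) (n + 1),
      partitionCoeff (n + 2) b * injectiveSum ν (fun l => b l) ≤
        (n + 2).choose 2 * (pairSum ν * (N : ℝ) ^ n) := fun b hb => by
    rw [partitionCoeff_eq_choose_two hb]
    gcongr
    refine (injectiveSum_le_prod_factorialMoment ν _).trans_eq ?_
    have hrest : ∀ l ∈ univ.erase 0, factorialMoment ν (b l) = N := fun l hl => by
      rw [val_eq_of_mem_partitionsInto_succ hb, if_neg (mem_erase.1 hl).1, factorialMoment_one hν]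
    rw [← mul_prod_erase univ _ (mem_univ 0), prod_congr rfl hrest,
      val_eq_of_mem_partitionsInto_succ hb, if_pos rfl, factorialMoment_two, prod_const,
      card_erase_of_mem (mem_univ 0), card_univ, Fintype.card_fin, Nat.add_sub_cancel]
  have hcard : #(partitionsInto (n + 2) (n + 1)) ≤ 1 := card_le_one.2 fun b hb b' hb' =>
    funext fun l => Fin.ext <| by
      rw [val_eq_of_mem_partitionsInto_succ hb, val_eq_of_mem_partitionsInto_succ hb']
  calc _ ≤ #(partitionsInto (n + 2) (n + 1)) • ((n + 2).choose 2 * (pairSum ν * (N : ℝ) ^ n)) :=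
        sum_le_card_nsmul _ _ _ hterm
    _ ≤ (n + 2).choose 2 * (pairSum ν * (N : ℝ) ^ n) := by
        rw [nsmul_eq_mul]
        have := pairSum_nonneg ν
        exact mul_le_of_le_one_left (by positivity) (by exact_mod_cast hcard)

theorem mul_sum_partitionsInto_le {N m : ℕ} {ν : Fin N → ℕ} (hν : ∑ i, ν i = N) :
    N * ∑ k ∈ Icc 1 (m - 2), ∑ b ∈ partitionsInto m k,
        partitionCoeff m b * injectiveSum ν (fun l => b l) ≤
      (∑ k ∈ Icc 1 (m - 2), ∑ b ∈ partitionsInto m k, partitionCoeff m b) *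
        ((N : ℝ) ^ (m - 2) * multipleMergerSum ν) := by
  rw [mul_sum, sum_mul]
  refine sum_le_sum fun k hk => ?_
  rw [mul_sum, sum_mul]
  refine sum_le_sum fun b hb => ?_
  rw [mul_left_comm]
  exact mul_le_mul_of_nonneg_left
    (mul_injectiveSum_le_of_mem_partitionsInto hν (by have := mem_Icc.1 hk; omega) hb)
    (partitionCoeff_nonneg m b)

theorem one_div_mul_sum_partitionsInto_succ_le {N n : ℕ} (hN : n + 2 ≤ N) {ν : Fin N → ℕ}
    (hν : ∑ i, ν i = N) :
    1 / (N * (N - 1) * fallingFact (N - 2) n) * ∑ b ∈ partitionsInto (n + 2) (n + 1),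
        partitionCoeff (n + 2) b * injectiveSum ν (fun l => b l) ≤
      ((n + 2).choose 2 : ℝ) * (1 + ((n : ℝ) + 2) ^ (n + 2) / N) *
        ((1 / ((N : ℝ) * (N - 1))) * pairSum ν) := by
  have hN₁ : (1 : ℝ) < N := by exact_mod_cast (show 1 < N by omega)
  have hP := fallingFact_sub_two_pos hN
  have := pairSum_nonneg ν
  calc 1 / (N * (N - 1) * fallingFact (N - 2) n) * _
      ≤ 1 / (N * (N - 1) * fallingFact (N - 2) n) * ((n + 2).choose 2 * (pairSum ν *
          ((1 + ((n : ℝ) + 2) ^ (n + 2) / N) * fallingFact (N - 2) n))) := by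
        gcongr 1 / _ * ?_
        exact (sum_partitionsInto_succ_le hν).trans
          (by gcongr; exact pow_le_one_add_div_mul_fallingFact_sub_two hN)
    _ = _ := by field_simp

theorem one_div_mul_sum_partitionsInto_le {N n : ℕ} (hN : n + 2 ≤ N) {ν : Fin N → ℕ}
    (hν : ∑ i, ν i = N) :
    1 / (N * (N - 1) * fallingFact (N - 2) n) * ∑ k ∈ Icc 1 n, ∑ b ∈ partitionsInto (n + 2) k,
        partitionCoeff (n + 2) b * injectiveSum ν (fun l => b l) ≤
      ((n : ℝ) + 2) ^ n * ((∑ k ∈ Icc 1 n, ∑ b ∈ partitionsInto (n + 2) k,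
          partitionCoeff (n + 2) b) + 1) * (1 + ((n : ℝ) + 2) ^ (n + 2) / N) *
        ((1 / ((N : ℝ) ^ 2 * (N - 1))) * multipleMergerSum ν) := by
  have hmid := mul_sum_partitionsInto_le (m := n + 2) hν
  simp only [Nat.add_sub_cancel] at hmid
  set K := ∑ k ∈ Icc 1 n, ∑ b ∈ partitionsInto (n + 2) k, partitionCoeff (n + 2) b
  set M := ∑ k ∈ Icc 1 n, ∑ b ∈ partitionsInto (n + 2) k,
    partitionCoeff (n + 2) b * injectiveSum ν (fun l => b l)
  set P := fallingFact (N - 2) n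
  have hN₁ : (1 : ℝ) < N := by exact_mod_cast (show 1 < N by omega)
  have hP : 0 < P := fallingFact_sub_two_pos hN
  have hK : 0 ≤ K := sum_nonneg fun _ _ => sum_nonneg fun _ _ => partitionCoeff_nonneg _ _
  have hT := multipleMergerSum_nonneg ν
  have hK' : K ≤ (K + 1) * (1 + ((n : ℝ) + 2) ^ (n + 2) / N) := by
    nlinarith [(by positivity : (0 : ℝ) ≤ ((n : ℝ) + 2) ^ (n + 2) / N)]
  calc 1 / (N * (N - 1) * P) * M
      = 1 / (N ^ 2 * (N - 1) * P) * (N * M) := by field_simp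
    _ ≤ 1 / (N ^ 2 * (N - 1) * P) * (K * ((n + 2) ^ n * P * multipleMergerSum ν)) := by
        gcongr 1 / _ * ?_
        exact hmid.trans (by gcongr; exact pow_le_pow_mul_fallingFact_sub_two hN)
    _ = (n + 2) ^ n * K * (1 / (N ^ 2 * (N - 1)) * multipleMergerSum ν) := by field_simp
    _ ≤ (n + 2) ^ n * ((K + 1) * (1 + ((n : ℝ) + 2) ^ (n + 2) / N)) *
          (1 / (N ^ 2 * (N - 1)) * multipleMergerSum ν) := by
        gcongr
    _ = _ := by ring

/-- **Lemma 4 of the paper.** For every `m ≥ 2` there are constants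
`B_m, C_m > 0` such that for every `N ≥ m` and offspring counts `ν` summing to `N`,
the total probability of a merger among `m` lineages (the sum over merger
configurations of the combinatorial factor times the sum over distinct index tuples of
products of falling factorials, normalized by `(N)_m`) is at most
`C(m,2)(1 + C_m/N) c_N + B_m (1 + C_m/N) D_N`. -/
theorem merger_probability_bound (m : ℕ) (hm : 2 ≤ m) :
    ∃ B C : ℝ, 0 < B ∧ 0 < C ∧
      ∀ N : ℕ, m ≤ N → ∀ ν : Fin N → ℕ, ∑ i, ν i = N →
        (1 / fallingFact (N : ℝ) m) *
            ∑ k ∈ Finset.Icc 1 (m - 1),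
              ∑ b ∈ Finset.univ.filter
                  (fun b : Fin k → Fin (m + 1) =>
                    (∀ l l' : Fin k, l ≤ l' → (b l' : ℕ) ≤ (b l : ℕ)) ∧
                    (∀ l, 1 ≤ (b l : ℕ)) ∧ ∑ l, (b l : ℕ) = m),
                ((m.factorial : ℝ) /
                    ∏ j ∈ Finset.range (m + 1),
                      ((j.factorial : ℝ) ^
                          ((Finset.univ.filter (fun l : Fin k => (b l : ℕ) = j)).card) *
                        (((Finset.univ.filter
                            (fun l : Fin k => (b l : ℕ) = j)).card).factorial : ℝ))) *
                  ∑ i ∈ Finset.univ.filter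
                      (fun i : Fin k → Fin N => Function.Injective i),
                    ∏ l, fallingFact (ν (i l) : ℝ) (b l : ℕ) ≤
          (m.choose 2 : ℝ) * (1 + C / (N : ℝ)) *
              ((1 / ((N : ℝ) * (N - 1))) * ∑ i, (ν i : ℝ) * ((ν i : ℝ) - 1)) +
            B * (1 + C / (N : ℝ)) *
              ((1 / ((N : ℝ) ^ 2 * (N - 1))) * ∑ i, (ν i : ℝ) * ((ν i : ℝ) - 1) *
                ((ν i : ℝ) + (1 / (N : ℝ)) *
                  ∑ j ∈ Finset.univ.erase i, (ν j : ℝ) ^ 2)) := by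
  obtain ⟨n, rfl⟩ := Nat.exists_eq_add_of_le' hm
  set K := ∑ k ∈ Icc 1 n, ∑ b ∈ partitionsInto (n + 2) k, partitionCoeff (n + 2) b
  have hK : 0 ≤ K := sum_nonneg fun _ _ => sum_nonneg fun _ _ => partitionCoeff_nonneg _ _
  refine ⟨((n : ℝ) + 2) ^ n * (K + 1), ((n : ℝ) + 2) ^ (n + 2), by positivity, by positivity,
    fun N hN ν hν => ?_⟩
  rw [show n + 2 - 1 = n + 1 by omega, sum_Icc_succ_top (by omega), fallingFact_add_two, mul_add,
    add_comm]
  exact add_le_add (one_div_mul_sum_partitionsInto_succ_le hN hν)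
    (one_div_mul_sum_partitionsInto_le hN hν)
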